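/- arXiv:1808.05302 — 2 statements merged into one kernel-verified Lean document; each statement's English description precedes it below -/
import Mathlib

section
/- Let g ≥ 1, let b : Fin 2g → ℂ^g be a family of vectors forming a basis of ℂ^g viewed as a real vector space, and let f : ℂ^g → ℂ be an entire function such that for each index i the function z ↦ f(z + b i) − f(z) is constant on ℂ^g. Then f is affine: there exist a ℂ-linear map L : ℂ^g → ℂ and a constant c ∈ ℂ such that f(z) = L(z) + c for all z ∈ ℂ^g. -/
open Complex

/-- an entire function on `ℂ^g` whose increments along each vector of a
real basis of `ℂ^g` (of cardinality `2g`) are constant functions is affine: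
`f(z) = L(z) + c` for a `ℂ`-linear form `L` and a constant `c`. -/
theorem entire_constant_increments_affine {g : ℕ} (hg : 1 ≤ g)
    (b : Fin (2 * g) → Fin g → ℂ)
    (hli : LinearIndependent ℝ b)
    (hspan : Submodule.span ℝ (Set.range b) = (⊤ : Submodule ℝ (Fin g → ℂ)))
    (f : (Fin g → ℂ) → ℂ) (hf : Differentiable ℂ f)
    (hper : ∀ i : Fin (2 * g), ∃ cᵢ : ℂ, ∀ z : Fin g → ℂ, f (z + b i) - f z = cᵢ) :
    ∃ (L : (Fin g → ℂ) →ₗ[ℂ] ℂ) (c : ℂ), ∀ z : Fin g → ℂ, f z = L z + c := by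
  classical
  -- the real basis of ℂ^g
  let B : Module.Basis (Fin (2 * g)) ℝ (Fin g → ℂ) := Module.Basis.mk hli hspan.ge
  have hBcoe : ⇑B = b := Module.Basis.coe_mk hli hspan.ge
  -- Step 1: all increments are constant functions
  have key : ∀ w z : Fin g → ℂ, f (z + w) - f z = f w - f 0 := by
    intro w
    set hw : (Fin g → ℂ) → ℂ := fun z => f (z + w) - f z with hhw
    have hwdiff : Differentiable ℂ hw :=
      (hf.comp (differentiable_id.add_const w)).sub hf
    -- hw is invariant under translation by each b i
    have hwper : ∀ i, ∀ z, hw (z + b i) = hw z := by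
      intro i z
      obtain ⟨c, hc⟩ := hper i
      have h1 := hc (z + w)
      have h2 := hc z
      simp only [hhw]
      rw [add_right_comm]
      linear_combination h1 - h2
    -- the set of invariant translations is an additive subgroup
    set S : AddSubgroup (Fin g → ℂ) :=
      { carrier := {v | ∀ z, hw (z + v) = hw z}
        add_mem' := by
          intro u v hu hv z
          rw [show z + (u + v) = z + v + u by rw [add_right_comm, add_assoc]]
          rw [hu (z + v), hv z]
        zero_mem' := by intro z; rw [add_zero]
        neg_mem' := by
          intro v hv z
          have := hv (z + -v)
          rw [add_assoc, neg_add_cancel, add_zero] at this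
          exact this.symm } with hS
    have hspanS : ∀ v ∈ Submodule.span ℤ (Set.range ⇑B), ∀ z, hw (z + v) = hw z := by
      have hle : Submodule.span ℤ (Set.range ⇑B) ≤ AddSubgroup.toIntSubmodule S := by
        rw [Submodule.span_le]
        rintro _ ⟨i, rfl⟩
        rw [hBcoe]
        exact hwper i
      intro v hv
      exact hle hv
    -- hw has bounded range
    have hbd : Bornology.IsBounded (Set.range hw) := by
      have hK : IsCompact (closure (ZSpan.fundamentalDomain B)) :=
        (ZSpan.fundamentalDomain_isBounded B).isCompact_closure
      have hsub : Set.range hw ⊆ hw '' closure (ZSpan.fundamentalDomain B) := by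
        rintro _ ⟨z, rfl⟩
        refine ⟨ZSpan.fract B z, subset_closure (ZSpan.fract_mem_fundamentalDomain B z), ?_⟩
        have hv : z - ZSpan.fract B z ∈ Submodule.span ℤ (Set.range ⇑B) := by
          rw [ZSpan.fract_apply, sub_sub_cancel]
          exact (ZSpan.floor B z).2
        have := hspanS _ hv (ZSpan.fract B z)
        rw [add_sub_cancel] at this
        exact this.symm
      exact ((hK.image hwdiff.continuous).isBounded).subset hsub
    -- Liouville
    intro z
    have := hwdiff.apply_eq_apply_of_bounded hbd z 0
    simpa [hhw] using this
  -- Step 2: the derivative of f is constant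
  have hdconst : ∀ z, fderiv ℂ f z = fderiv ℂ f 0 := by
    intro z
    have heq : (fun h => f (z + h)) = fun h => f h + (f z - f 0) := by
      funext h
      have := key z h
      rw [add_comm z h]
      linear_combination this
    have hL : HasFDerivAt (fun h => f (z + h)) (fderiv ℂ f z) 0 := by
      have h1 : HasFDerivAt (fun h : Fin g → ℂ => z + h)
          (ContinuousLinearMap.id ℂ (Fin g → ℂ)) 0 := (hasFDerivAt_id 0).const_add z
      have h2 : HasFDerivAt f (fderiv ℂ f z) (z + 0) := by
        rw [add_zero]; exact (hf z).hasFDerivAt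
      have h3 := h2.comp 0 h1
      simp only [ContinuousLinearMap.comp_id] at h3
      exact h3
    have hR : HasFDerivAt (fun h => f (z + h)) (fderiv ℂ f 0) 0 := by
      rw [heq]
      exact (hf 0).hasFDerivAt.add_const _
    exact hL.unique hR
  -- Conclusion
  set L' := fderiv ℂ f 0 with hL'
  refine ⟨L'.toLinearMap, f 0, ?_⟩
  have hφdiff : Differentiable ℂ (fun z => f z - L' z) := hf.sub L'.differentiable
  have hφz : ∀ x, fderiv ℂ (fun z => f z - L' z) x = 0 := by
    intro x
    rw [fderiv_fun_sub (hf x) (L'.differentiable x), L'.fderiv, hdconst x, sub_self]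
  intro z
  have := is_const_of_fderiv_eq_zero hφdiff hφz z 0
  simp only [map_zero, sub_zero] at this
  rw [ContinuousLinearMap.coe_coe]
  linear_combination this
end

section
/- Let g ≥ 1, let M be a g×g complex matrix that is Hermitian positive definite, let b : Fin 2g → ℂ^g be a family of vectors forming a basis of ℂ^g viewed as a real vector space, let a ∈ ℂ^g, and let f : ℂ^g → ℂ be an entire function such that for every z ∈ ℂ^g and every index i one has f(z + b i) − f(z) = Σ_{j,k} a_j · M_{jk} · conj((b i)_k). Then a = 0. -/
open Complex BigOperators
open scoped ComplexOrder

/-! For every `w`, the function `z ↦ f (z + w) - f z` is entire and periodic along the lattice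
spanned by `b`, hence bounded (its values are taken on a compact fundamental domain) and
constant by Liouville. So `f - f 0` is additive and continuous, thus `ℝ`-linear, and being
`ℂ`-differentiable it is `ℂ`-linear. It agrees on the real basis `b`, hence everywhere, with the
`ℂ`-antilinear map `H(a, ·)`; a map that is both linear and antilinear vanishes, and
`H(a, a) = 0` forces `a = 0`. -/

open Function Submodule Set Matrix

theorem Function.Periodic.of_mem_span_int {α β ι : Type*} [AddCommGroup α] {G : α → β}
    {b : ι → α} (hper : ∀ i, Periodic G (b i)) {v : α} (hv : v ∈ span ℤ (range b)) :
    Periodic G v := by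
  induction hv using Submodule.span_induction with
  | mem _ h => obtain ⟨i, rfl⟩ := h; exact hper i
  | zero => exact fun x => congrArg G (add_zero x)
  | add _ _ _ _ hu hw => exact hu.add_period hw
  | smul n _ _ hw => exact hw.zsmul n

theorem Function.Periodic.isBounded_range_of_basis {E β ι : Type*} [NormedAddCommGroup E]
    [NormedSpace ℝ E] [PseudoMetricSpace β] [Fintype ι] {G : E → β} (hG : Continuous G)
    (b : Module.Basis ι ℝ E) (hper : ∀ i, Periodic G (b i)) : Bornology.IsBounded (range G) := by
  have : FiniteDimensional ℝ E := Module.Finite.of_basis b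
  refine ((isCompact_closedBall (0 : E) (∑ i, ‖b i‖)).image hG).isBounded.subset ?_
  rintro _ ⟨z, rfl⟩
  refine ⟨ZSpan.fract b z, mem_closedBall_zero_iff.mpr (ZSpan.norm_fract_le b z), ?_⟩
  rw [ZSpan.fract_apply, sub_eq_add_neg]
  exact Periodic.of_mem_span_int hper (neg_mem (ZSpan.floor b z).2) z

section

variable {E F ι : Type*} [NormedAddCommGroup E] [NormedSpace ℂ E] [NormedAddCommGroup F]
  [NormedSpace ℂ F]

theorem Differentiable.apply_eq_apply_of_periodic_basis [Fintype ι] {G : E → F}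
    (hG : Differentiable ℂ G) (b : Module.Basis ι ℝ E) (hper : ∀ i, Periodic G (b i)) (z w : E) :
    G z = G w :=
  hG.apply_eq_apply_of_bounded (Periodic.isBounded_range_of_basis hG.continuous b hper) z w

theorem ContinuousLinearMap.restrictScalars_fderiv_eq {φ : E →L[ℝ] F} {x : E}
    (hφ : DifferentiableAt ℂ φ x) : (fderiv ℂ φ x).restrictScalars ℝ = φ :=
  (hφ.hasFDerivAt.restrictScalars ℝ).unique φ.hasFDerivAt

theorem Differentiable.exists_eq_add_clm_of_sub_translate_const [Fintype ι] {f : E → F}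
    (hf : Differentiable ℂ f) (b : Module.Basis ι ℝ E) {c : ι → F}
    (hc : ∀ i z, f (z + b i) - f z = c i) : ∃ L : E →L[ℂ] F, ∀ z, f z = f 0 + L z := by
  have hadd : ∀ z w, f (z + w) - f z = f w - f 0 := fun z w => by
    have hG : Differentiable ℂ fun z => f (z + w) - f z := by fun_prop
    simpa using hG.apply_eq_apply_of_periodic_basis b (fun i z => by
      rw [add_right_comm, sub_eq_sub_iff_sub_eq_sub, hc, hc]) z 0
  let A : E →+ F :=
    { toFun := fun z => f z - f 0
      map_zero' := sub_self _
      map_add' := fun z w => by rw [← hadd z w]; abel }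
  let φ := A.toRealLinearMap (hf.continuous.sub continuous_const)
  have hφ : DifferentiableAt ℂ φ 0 := (hf.sub_const (f 0)) 0
  exact ⟨fderiv ℂ φ 0, fun z =>
    eq_add_of_sub_eq' congr($(ContinuousLinearMap.restrictScalars_fderiv_eq hφ) z).symm⟩

theorem LinearMap.eq_zero_of_eqOn_of_span_real_eq_top {E F : Type*} [AddCommGroup E]
    [Module ℂ E] [AddCommGroup F] [Module ℂ F] (L : E →ₗ[ℂ] F) (ψ : E →ₗ⋆[ℂ] F) {s : Set E}
    (hs : span ℝ s = ⊤) (h : EqOn L ψ s) : ψ = 0 := by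
  have hreal : ∀ v, L v = ψ v := fun v => by
    induction (hs ▸ mem_top : v ∈ span ℝ s) using Submodule.span_induction with
    | mem _ hv => exact h hv
    | zero => simp
    | add _ _ _ _ hu hw => simp [hu, hw]
    | smul r _ _ hv => rw [← Complex.coe_smul, map_smul, map_smulₛₗ, hv, conj_ofReal]
  ext v
  have hI := hreal (I • v)
  rw [map_smul, map_smulₛₗ, hreal v, conj_I, ← sub_eq_zero, ← sub_smul] at hI
  simpa [sub_eq_add_neg, I_ne_zero] using hI

end

theorem Matrix.PosDef.eq_zero_of_toLinearMapₛₗ₂'_self_eq_zero {n : Type*} [Fintype n]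
    [DecidableEq n] {M : Matrix n n ℂ} (hM : M.PosDef) {x : n → ℂ}
    (hx : toLinearMapₛₗ₂' ℂ (RingHom.id ℂ) (starRingEnd ℂ) M x x = 0) : x = 0 := by
  have hdot : star (star x) ⬝ᵥ (M *ᵥ star x) =
      toLinearMapₛₗ₂' ℂ (RingHom.id ℂ) (starRingEnd ℂ) M x x := by
    rw [star_star]
    simp only [toLinearMapₛₗ₂'_apply, dotProduct, mulVec, Finset.mul_sum, RingHom.id_apply,
      smul_eq_mul, Pi.star_apply, RCLike.star_def, mul_comm (M _ _)]
  by_contra h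
  exact (hM.dotProduct_mulVec_pos (star_ne_zero.mpr h)).ne' (hdot.trans hx)

theorem coefficients_vanish_of_coboundary_general {g : ℕ}
    (M : Matrix (Fin g) (Fin g) ℂ) (hM : M.PosDef)
    (b : Fin (2 * g) → Fin g → ℂ)
    (hli : LinearIndependent ℝ b)
    (hspan : Submodule.span ℝ (Set.range b) = (⊤ : Submodule ℝ (Fin g → ℂ)))
    (a : Fin g → ℂ)
    (f : (Fin g → ℂ) → ℂ) (hf : Differentiable ℂ f)
    (hcob : ∀ (z : Fin g → ℂ) (i : Fin (2 * g)),
      f (z + b i) - f z = ∑ j, ∑ k, a j * M j k * (starRingEnd ℂ) (b i k)) :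
    a = 0 := by
  set H := toLinearMapₛₗ₂' ℂ (RingHom.id ℂ) (starRingEnd ℂ) M
  have hH : ∀ v, H a v = ∑ j, ∑ k, a j * M j k * (starRingEnd ℂ) (v k) := fun v => by
    simp only [H, toLinearMapₛₗ₂'_apply, RingHom.id_apply, smul_eq_mul,
      mul_comm ((starRingEnd ℂ) _), mul_assoc]
  obtain ⟨L, hL⟩ := hf.exists_eq_add_clm_of_sub_translate_const (Module.Basis.mk hli hspan.ge)
    (c := fun i => H a (b i)) fun i z => by simpa [hH] using hcob z i
  have hHa : H a = 0 := by
    refine LinearMap.eq_zero_of_eqOn_of_span_real_eq_top L.toLinearMap (H a) hspan ?_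
    rintro _ ⟨i, rfl⟩
    have := hcob 0 i
    rwa [zero_add, hL, add_sub_cancel_left, ← hH] at this
  exact hM.eq_zero_of_toLinearMapₛₗ₂'_self_eq_zero (by rw [hHa]; rfl)

/-- let `M` be a Hermitian positive definite `g×g` complex matrix,
`b` a family of `2g` vectors forming a real basis of `ℂ^g`, `a ∈ ℂ^g`, and `f`
entire with `f(z + b i) − f(z) = Σ_{j,k} a_j M_{jk} conj((b i)_k)` for all `z, i`.
Then `a = 0`. -/
theorem coefficients_vanish_of_coboundary {g : ℕ} (hg : 1 ≤ g)
    (M : Matrix (Fin g) (Fin g) ℂ) (hM : M.PosDef)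
    (b : Fin (2 * g) → Fin g → ℂ)
    (hli : LinearIndependent ℝ b)
    (hspan : Submodule.span ℝ (Set.range b) = (⊤ : Submodule ℝ (Fin g → ℂ)))
    (a : Fin g → ℂ)
    (f : (Fin g → ℂ) → ℂ) (hf : Differentiable ℂ f)
    (hcob : ∀ (z : Fin g → ℂ) (i : Fin (2 * g)),
      f (z + b i) - f z = ∑ j, ∑ k, a j * M j k * (starRingEnd ℂ) (b i k)) :
    a = 0 :=
  coefficients_vanish_of_coboundary_general M hM b hli hspan a f hf hcob
end
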